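/- lim_{p → ∞, p real} √p · (1/π) ∫_{-∞}^{∞} (sin²t / t²)^p dt = √(3/π). -/

import Mathlib

open MeasureTheory Real

/-- `(sin t / t)^2`, extended continuously by `1` at `t = 0`. -/
noncomputable def sinc2 (t : ℝ) : ℝ := if t = 0 then 1 else Real.sin t ^ 2 / t ^ 2

/-!
Laplace's method. Near its maximum at `0`, `log (sinc2 t) = -t ^ 2 / 3 + o(t ^ 2)`, so after the
substitution `t = s / √p` the integrand `sinc2 (s / √p) ^ p` tends to `exp (-s ^ 2 / 3)`. For
`|t| ≤ π` the bound `sinc2 t ≤ cos (t / 2) ^ 2 ≤ exp (-t ^ 2 / π ^ 2)` dominates it by a fixed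
Gaussian, so `√p ∫_{|t| ≤ π} sinc2 ^ p → ∫ exp (-s ^ 2 / 3) ds = √(3π)`. For `|t| ≥ π` we have
`sinc2 t ≤ 1 / π ^ 2 < 1`, so that part of the integral decays exponentially in `p`.
-/

open Filter Topology Set

theorem tendsto_log_div_of_tendsto_sub_one_div {α : Type*} {l : Filter α} {u v : α → ℝ} {b : ℝ}
    (hu : Tendsto u l (𝓝 1)) (h : Tendsto (fun x => (u x - 1) / v x) l (𝓝 b)) :
    Tendsto (fun x => log (u x) / v x) l (𝓝 b) := by
  have hslope : Tendsto (dslope log 1) (𝓝 1) (𝓝 1) := by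
    simpa [dslope_same] using
      (continuousAt_dslope_same.2 (differentiableAt_log one_ne_zero)).tendsto
  have hfactor : ∀ x, log (u x) / v x = dslope log 1 (u x) * ((u x - 1) / v x) := fun x => by
    have := sub_smul_dslope log 1 (u x)
    rw [smul_eq_mul, log_one, sub_zero] at this
    rw [← this]; ring
  simpa only [hfactor, Function.comp_apply, one_mul] using (hslope.comp hu).mul h

theorem MeasureTheory.Integrable.rpow_of_le_one {α : Type*} [MeasurableSpace α] {μ : Measure α}
    {f : α → ℝ} (hf : Integrable f μ) (hf0 : ∀ x, 0 ≤ f x) (hf1 : ∀ x, f x ≤ 1) {p : ℝ}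
    (hp : 1 ≤ p) : Integrable (fun x => f x ^ p) μ :=
  hf.mono (hf.aemeasurable.pow_const p).aestronglyMeasurable <| ae_of_all _ fun x => by
    rw [norm_of_nonneg (rpow_nonneg (hf0 x) p), norm_of_nonneg (hf0 x)]
    exact rpow_le_self_of_le_one (hf0 x) (hf1 x) hp

theorem tendsto_sqrt_mul_setIntegral_rpow_of_le_of_lt_one {α : Type*} [MeasurableSpace α]
    {μ : Measure α} {f : α → ℝ} {s : Set α} {q : ℝ} (hs : MeasurableSet s)
    (hf : IntegrableOn f s μ) (hf0 : ∀ x ∈ s, 0 ≤ f x) (hq : q < 1) (hfq : ∀ x ∈ s, f x ≤ q) :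
    Tendsto (fun p => √p * ∫ x in s, f x ^ p ∂μ) atTop (𝓝 0) := by
  set b := 1 - q
  have hb : 0 < b := sub_pos.2 hq
  have hpoint : ∀ p, 1 ≤ p → ∀ x ∈ s, f x ^ p ≤ exp (-b * (p - 1)) * f x := by
    intro p hp x hx
    have hfx : f x ≤ exp (-b) := (hfq x hx).trans (by linarith [add_one_le_exp (-b)])
    calc f x ^ p = f x ^ (p - 1) * f x := by
          rw [← rpow_add_one' (hf0 x hx) (by linarith), sub_add_cancel]
      _ ≤ exp (-b) ^ (p - 1) * f x :=
          mul_le_mul_of_nonneg_right (rpow_le_rpow (hf0 x hx) hfx (by linarith)) (hf0 x hx)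
      _ = exp (-b * (p - 1)) * f x := by rw [← exp_mul]
  have hdecay : Tendsto (fun p => √p * (exp (-b * (p - 1)) * ∫ x in s, f x ∂μ)) atTop (𝓝 0) := by
    have := (tendsto_rpow_mul_exp_neg_mul_atTop_nhds_zero (1 / 2) b hb).mul_const
      (exp b * ∫ x in s, f x ∂μ)
    rw [zero_mul] at this
    refine this.congr fun p => ?_
    rw [sqrt_eq_rpow, show -b * (p - 1) = -b * p + b by ring, exp_add]
    ring
  refine tendsto_of_tendsto_of_tendsto_of_le_of_le' tendsto_const_nhds hdecay ?_ ?_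
  · exact Eventually.of_forall fun p => mul_nonneg (sqrt_nonneg p)
      (setIntegral_nonneg hs fun x hx => rpow_nonneg (hf0 x hx) p)
  · filter_upwards [eventually_ge_atTop 1] with p hp
    refine mul_le_mul_of_nonneg_left ?_ (sqrt_nonneg p)
    rw [← integral_const_mul]
    exact integral_mono_of_nonneg
      ((ae_restrict_iff' hs).2 (ae_of_all _ fun x hx => rpow_nonneg (hf0 x hx) p))
      (hf.const_mul _) ((ae_restrict_iff' hs).2 (ae_of_all _ (hpoint p hp)))

section LaplaceMethod

variable {f : ℝ → ℝ} {a c δ : ℝ}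

theorem tendsto_rpow_div_sqrt_of_tendsto_log_div_sq (hf0 : ∀ t, 0 ≤ f t) (ha : 0 < a)
    (hlog : Tendsto (fun t => log (f t) / t ^ 2) (𝓝[≠] 0) (𝓝 (-a))) {s : ℝ} (hs : s ≠ 0) :
    Tendsto (fun p => f (s / √p) ^ p) atTop (𝓝 (exp (-a * s ^ 2))) := by
  have hscale : Tendsto (fun p : ℝ => s / √p) atTop (𝓝[≠] 0) := by
    refine tendsto_nhdsWithin_iff.2 ⟨tendsto_const_nhds.div_atTop tendsto_sqrt_atTop, ?_⟩
    filter_upwards [eventually_gt_atTop 0] with p hp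
    exact div_ne_zero hs (sqrt_pos.2 hp).ne'
  -- `log 0 = 0`, so the negative limit of `log (f t) / t ^ 2` keeps `f` off zero near `0`
  have hpos : ∀ᶠ t in 𝓝[≠] 0, 0 < f t := by
    filter_upwards [hlog.eventually (gt_mem_nhds (neg_neg_of_pos ha))] with t ht
    refine (hf0 t).lt_of_ne' fun h0 => ?_
    simp [h0] at ht
  have hexp := (continuous_exp.tendsto _).comp ((hlog.comp hscale).const_mul (s ^ 2))
  rw [mul_comm] at hexp
  refine hexp.congr' ?_
  filter_upwards [hscale.eventually hpos, eventually_gt_atTop 0] with p hfp hp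
  rw [Function.comp_apply, Function.comp_apply, rpow_def_of_pos hfp, div_pow, sq_sqrt hp.le]
  field_simp

theorem norm_indicator_rpow_div_sqrt_le (hf0 : ∀ t, 0 ≤ f t)
    (hnear : ∀ t, |t| ≤ δ → f t ≤ exp (-c * t ^ 2)) {p : ℝ} (hp : 0 < p) (s : ℝ) :
    ‖(Icc (-δ) δ).indicator (fun t => f t ^ p) (s / √p)‖ ≤ exp (-c * s ^ 2) := by
  by_cases hmem : s / √p ∈ Icc (-δ) δ
  · rw [indicator_of_mem hmem, norm_of_nonneg (rpow_nonneg (hf0 _) p)]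
    calc f (s / √p) ^ p ≤ exp (-c * (s / √p) ^ 2) ^ p :=
          rpow_le_rpow (hf0 _) (hnear _ (abs_le.2 hmem)) hp.le
      _ = exp (-c * s ^ 2) := by
          rw [← exp_mul, div_pow, sq_sqrt hp.le]
          field_simp
  · rw [indicator_of_notMem hmem, norm_zero]
    exact (exp_pos _).le

theorem tendsto_sqrt_mul_setIntegral_Icc_rpow (hf : AEStronglyMeasurable f)
    (hf0 : ∀ t, 0 ≤ f t) (ha : 0 < a)
    (hlog : Tendsto (fun t => log (f t) / t ^ 2) (𝓝[≠] 0) (𝓝 (-a))) (hc : 0 < c) (hδ : 0 < δ)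
    (hnear : ∀ t, |t| ≤ δ → f t ≤ exp (-c * t ^ 2)) :
    Tendsto (fun p => √p * ∫ t in Icc (-δ) δ, f t ^ p) atTop (𝓝 √(π / a)) := by
  set g : ℝ → ℝ → ℝ := fun p => (Icc (-δ) δ).indicator fun t => f t ^ p
  have hsubst : ∀ p, 0 < p → ∫ s, g p (s / √p) = √p * ∫ t in Icc (-δ) δ, f t ^ p := by
    intro p hp
    rw [Measure.integral_comp_div, abs_of_pos (sqrt_pos.2 hp), smul_eq_mul,
      integral_indicator measurableSet_Icc]
  have hmeas : ∀ p, 0 < p → AEStronglyMeasurable fun s => g p (s / √p) := by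
    intro p hp
    have hg : AEStronglyMeasurable (g p) :=
      (hf.aemeasurable.pow_const p).aestronglyMeasurable.indicator measurableSet_Icc
    have h := hg.comp_quasiMeasurePreserving (Measure.quasiMeasurePreserving_smul volume
      (inv_ne_zero (sqrt_pos.2 hp).ne'))
    simp only [Function.comp_def, smul_eq_mul, ← div_eq_inv_mul] at h
    exact h
  have hlim : ∀ s, s ≠ 0 → Tendsto (fun p => g p (s / √p)) atTop (𝓝 (exp (-a * s ^ 2))) := by
    intro s hs
    refine (tendsto_rpow_div_sqrt_of_tendsto_log_div_sq hf0 ha hlog hs).congr' ?_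
    have hsmall : Tendsto (fun p : ℝ => s / √p) atTop (𝓝 0) :=
      tendsto_const_nhds.div_atTop tendsto_sqrt_atTop
    filter_upwards [hsmall.eventually (Icc_mem_nhds (neg_neg_of_pos hδ) hδ)] with p hp
    exact (indicator_of_mem (show s / √p ∈ Icc (-δ) δ from hp) (fun t => f t ^ p)).symm
  have hdct := tendsto_integral_filter_of_dominated_convergence (fun s => exp (-c * s ^ 2))
    ((eventually_gt_atTop 0).mono hmeas)
    ((eventually_gt_atTop 0).mono fun p hp =>
      ae_of_all _ (norm_indicator_rpow_div_sqrt_le hf0 hnear hp))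
    (integrable_exp_neg_mul_sq hc) ((volume.ae_ne 0).mono hlim)
  rw [integral_gaussian] at hdct
  exact hdct.congr' ((eventually_gt_atTop 0).mono hsubst)

theorem tendsto_sqrt_mul_integral_rpow_of_quadratic_max {q : ℝ} (hf : Integrable f)
    (hf0 : ∀ t, 0 ≤ f t) (ha : 0 < a)
    (hlog : Tendsto (fun t => log (f t) / t ^ 2) (𝓝[≠] 0) (𝓝 (-a))) (hc : 0 < c) (hδ : 0 < δ)
    (hnear : ∀ t, |t| ≤ δ → f t ≤ exp (-c * t ^ 2)) (hq : q < 1)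
    (hfar : ∀ t, δ ≤ |t| → f t ≤ q) :
    Tendsto (fun p => √p * ∫ t, f t ^ p) atTop (𝓝 √(π / a)) := by
  have hf1 : ∀ t, f t ≤ 1 := fun t => (le_total |t| δ).elim
    (fun ht => (hnear t ht).trans (exp_le_one_iff.2
      (mul_nonpos_of_nonpos_of_nonneg (neg_nonpos.2 hc.le) (sq_nonneg t))))
    (fun ht => (hfar t ht).trans hq.le)
  have hfar' : ∀ t ∈ (Icc (-δ) δ)ᶜ, f t ≤ q := fun t ht =>
    hfar t (le_of_lt (not_le.1 fun h => ht (abs_le.1 h)))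
  have hsplit := (tendsto_sqrt_mul_setIntegral_Icc_rpow hf.aestronglyMeasurable hf0 ha hlog hc hδ
    hnear).add (tendsto_sqrt_mul_setIntegral_rpow_of_le_of_lt_one measurableSet_Icc.compl
      hf.integrableOn (fun t _ => hf0 t) hq hfar')
  rw [add_zero] at hsplit
  refine hsplit.congr' ((eventually_ge_atTop 1).mono fun p hp => ?_)
  show _ = √p * ∫ t, f t ^ p
  rw [← mul_add, integral_add_compl measurableSet_Icc (hf.rpow_of_le_one hf0 hf1 hp)]

end LaplaceMethod

theorem sinc2_eq_sinc_sq (t : ℝ) : sinc2 t = sinc t ^ 2 := by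
  rcases eq_or_ne t 0 with rfl | ht
  · simp [sinc2]
  · rw [sinc2, if_neg ht, sinc_of_ne_zero ht, div_pow]

theorem sinc2_nonneg (t : ℝ) : 0 ≤ sinc2 t := sinc2_eq_sinc_sq t ▸ sq_nonneg _

theorem sinc2_le_one (t : ℝ) : sinc2 t ≤ 1 :=
  sinc2_eq_sinc_sq t ▸ (sq_le_one_iff_abs_le_one _).2 (abs_sinc_le_one t)

theorem continuous_sinc2 : Continuous sinc2 := by
  rw [show sinc2 = fun t => sinc t ^ 2 from funext sinc2_eq_sinc_sq]
  exact continuous_sinc.pow 2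

theorem sinc2_le_inv_sq {t : ℝ} (ht : t ≠ 0) : sinc2 t ≤ (t ^ 2)⁻¹ := by
  rw [sinc2, if_neg ht, div_eq_mul_inv]
  exact mul_le_of_le_one_left (by positivity) (sin_sq_le_one t)

theorem integrable_sinc2 : Integrable sinc2 := by
  refine (integrable_inv_one_add_sq.const_mul 2).mono' continuous_sinc2.aestronglyMeasurable
    (ae_of_all _ fun t => ?_)
  have hmul : sinc2 t * t ^ 2 ≤ 1 := by
    rcases eq_or_ne t 0 with rfl | ht
    · simp
    · simpa [ht] using mul_le_mul_of_nonneg_right (sinc2_le_inv_sq ht) (sq_nonneg t)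
  rw [norm_of_nonneg (sinc2_nonneg t), ← div_eq_mul_inv, le_div_iff₀ (by positivity)]
  linarith [sinc2_le_one t]

theorem sinc2_le_inv_pi_sq {t : ℝ} (ht : π ≤ |t|) : sinc2 t ≤ (π ^ 2)⁻¹ := by
  have ht0 : t ≠ 0 := abs_pos.1 (pi_pos.trans_le ht)
  refine (sinc2_le_inv_sq ht0).trans (inv_anti₀ (by positivity) ?_)
  simpa only [sq_abs] using pow_le_pow_left₀ pi_pos.le ht 2

theorem sinc2_le_cos_half_sq (t : ℝ) : sinc2 t ≤ cos (t / 2) ^ 2 := by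
  rcases eq_or_ne t 0 with rfl | ht
  · simp [sinc2]
  rw [sinc2, if_neg ht, div_le_iff₀ (by positivity)]
  have hsin : sin t = 2 * sin (t / 2) * cos (t / 2) := by rw [← sin_two_mul]; ring_nf
  rw [hsin]
  nlinarith [mul_le_mul_of_nonneg_right (sin_sq_le_sq (x := t / 2)) (sq_nonneg (cos (t / 2)))]

theorem sinc2_le_exp_neg_sq {t : ℝ} (ht : |t| ≤ π) : sinc2 t ≤ exp (-(π ^ 2)⁻¹ * t ^ 2) :=
  calc sinc2 t ≤ cos (t / 2) ^ 2 := sinc2_le_cos_half_sq t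
    _ = 1 / 2 + cos t / 2 := by rw [cos_sq, mul_div_cancel₀ t two_ne_zero]
    _ ≤ -(π ^ 2)⁻¹ * t ^ 2 + 1 := by
        have := cos_le_one_sub_mul_cos_sq ht
        rw [div_mul_eq_mul_div] at this
        linarith [show 2 * t ^ 2 / π ^ 2 = 2 * ((π ^ 2)⁻¹ * t ^ 2) by ring]
    _ ≤ exp (-(π ^ 2)⁻¹ * t ^ 2) := add_one_le_exp _

theorem tendsto_sinc_sub_one_div_sq :
    Tendsto (fun t => (sinc t - 1) / t ^ 2) (𝓝[≠] 0) (𝓝 (-(1 / 6))) := by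
  have hclose : ∀ᶠ t in 𝓝[≠] 0, ‖(sinc t - 1) / t ^ 2 - -(1 / 6)‖ ≤ t ^ 2 / 100 := by
    filter_upwards [self_mem_nhdsWithin,
      nhdsWithin_le_nhds (Icc_mem_nhds neg_one_lt_zero one_pos)] with t (ht0 : t ≠ 0) ht1
    have hid : (sinc t - 1) / t ^ 2 - -(1 / 6) = (sin t - (t - t ^ 3 / 6)) / t ^ 3 := by
      rw [sinc_of_ne_zero ht0, eq_div_iff (pow_ne_zero 3 ht0)]
      field_simp
      ring
    rw [hid, norm_div, norm_pow, norm_eq_abs, div_le_iff₀ (by positivity)]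
    calc |sin t - (t - t ^ 3 / 6)| ≤ |t| ^ 5 / 100 := sin_bound (abs_le.2 ht1)
      _ = t ^ 2 / 100 * |t| ^ 3 := by rw [← sq_abs t]; ring
  have hsq : Tendsto (fun t : ℝ => t ^ 2 / 100) (𝓝[≠] 0) (𝓝 0) := by
    simpa using (((continuous_pow 2).div_const (100 : ℝ)).tendsto 0).mono_left nhdsWithin_le_nhds
  exact tendsto_sub_nhds_zero_iff.1 (squeeze_zero_norm' hclose hsq)

theorem tendsto_log_sinc2_div_sq :
    Tendsto (fun t => log (sinc2 t) / t ^ 2) (𝓝[≠] 0) (𝓝 (-(1 / 3))) := by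
  have hsinc : Tendsto sinc (𝓝[≠] 0) (𝓝 1) :=
    sinc_zero ▸ continuous_sinc.continuousAt.tendsto.mono_left nhdsWithin_le_nhds
  have h := (tendsto_log_div_of_tendsto_sub_one_div hsinc tendsto_sinc_sub_one_div_sq).const_mul 2
  simp only [sinc2_eq_sinc_sq, log_pow, Nat.cast_ofNat, mul_div_assoc]
  convert h using 2
  norm_num

theorem sinc_integral_asymptotics_real :
    Filter.Tendsto (fun p : ℝ => Real.sqrt p * ((1 / π) * ∫ t : ℝ, sinc2 t ^ p))
      Filter.atTop (nhds (Real.sqrt (3 / π))) := by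
  have hlaplace := tendsto_sqrt_mul_integral_rpow_of_quadratic_max integrable_sinc2 sinc2_nonneg
    (by norm_num) tendsto_log_sinc2_div_sq (by positivity) pi_pos (fun _ => sinc2_le_exp_neg_sq)
    (inv_lt_one_of_one_lt₀ (one_lt_pow₀ (by linarith [pi_gt_three]) two_ne_zero))
    (fun _ => sinc2_le_inv_pi_sq)
  have hconst : 1 / π * √(π / (1 / 3)) = √(3 / π) := by
    rw [show π / (1 / 3) = 3 / π * π ^ 2 by field_simp, sqrt_mul (by positivity),
      sqrt_sq pi_pos.le]
    field_simp
  rw [← hconst]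
  convert hlaplace.const_mul (1 / π) using 2
  ring
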